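/- arXiv:2105.06322 — 2 statements merged into one kernel-verified Lean document; each statement's English description precedes it below -/
import Mathlib

section
/- Let G be the complete digraph on a finite vertex set V with n = |V| ≥ 2 (i.e., every ordered pair of distinct vertices is an arc), fix a leader L ∈ V and a premium p ≥ 0, and let R be the unique function satisfying the redemption-premium recurrence. Then the leader's total redemption premium R(L) := Σ_{u : (u, L) an arc} R((L), u) satisfies R(L) ≥ p · (n−1)!. Hence in the complete digraph the leader's premium grows at least factorially (in particular, exponentially) in the number of vertices. -/
/-!
A digraph on a finite vertex set `V` is given by its arc relation `A : V → V → Prop`,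
where arcs are ordered pairs of *distinct* vertices (irreflexivity hypothesis `hirr`).
A forward path is a nonempty list of pairwise-distinct vertices in which consecutive
vertices are joined by arcs; a forward cycle is such a list whose first and last
vertices coincide, all other vertices being pairwise distinct.
-/

/-- `l` is a forward path in the digraph with arc relation `A`. -/
def IsFwdPath {V : Type*} (A : V → V → Prop) (l : List V) : Prop :=
  l ≠ [] ∧ l.Nodup ∧ l.Chain' A

/-- `l` is a forward cycle in the digraph with arc relation `A`:
it has length at least 2 (`k ≥ 1`), its first and last vertices coincide,
all other vertices are pairwise distinct, and consecutive vertices are joined by arcs. -/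
def IsFwdCycle {V : Type*} (A : V → V → Prop) (l : List V) : Prop :=
  2 ≤ l.length ∧ l.head? = l.getLast? ∧ l.dropLast.Nodup ∧ l.Chain' A

instance {V : Type*} (A : V → V → Prop) [DecidableEq V] [DecidableRel A] (l : List V) :
    Decidable (IsFwdPath A l) := by unfold IsFwdPath List.Chain'; infer_instance

instance {V : Type*} (A : V → V → Prop) [DecidableEq V] [DecidableRel A] (l : List V) :
    Decidable (IsFwdCycle A l) := by unfold IsFwdCycle List.Chain'; infer_instance

/-- The domain of the redemption-premium function `R`: pairs `(q, v)` where `q` is a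
forward path ending at the leader `L` and `v || q` (i.e. `v :: q`) is a forward path
or a forward cycle. -/
def RDom {V : Type*} (A : V → V → Prop) (L : V) (q : List V) (v : V) : Prop :=
  IsFwdPath A q ∧ q.getLast? = some L ∧ (IsFwdPath A (v :: q) ∨ IsFwdCycle A (v :: q))

/-- `R` satisfies the redemption-premium recurrence on its domain:
`R(q, v) = p` if `v || q` is a forward cycle, and
`R(q, v) = p + Σ_u R(v || q, u)` if `v || q` is a forward path, the sum ranging over
vertices `u` with `(u, v)` an arc and `u || (v || q)` a forward path or forward cycle. -/
def SatisfiesRRec {V : Type*} [Fintype V] [DecidableEq V] (A : V → V → Prop)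
    [DecidableRel A] (L : V) (p : ℝ) (R : List V → V → ℝ) : Prop :=
  ∀ q v, RDom A L q v →
    (IsFwdCycle A (v :: q) → R q v = p) ∧
    (IsFwdPath A (v :: q) →
      R q v = p + ∑ u ∈ Finset.univ.filter
          (fun u => A u v ∧ (IsFwdPath A (u :: v :: q) ∨ IsFwdCycle A (u :: v :: q))),
          R (v :: q) u)

/-!
In the complete digraph every nodup list is a forward path, and the only way to close a path
`l` ending at the leader into a forward cycle is to prepend the leader itself. Write `T(l)` for
the sum of `R l u` over the vertices `u` admitted by the recurrence. Each of the `n - |l|`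
vertices outside `l` contributes `p + T(u :: l)`, every other admitted vertex contributes
`p ≥ 0`, so `T(l) ≥ (n - |l|) · p · (n - |l| - 1)!` by induction on `n - |l|`. When `l` already
contains all `n ≥ 2` vertices, the closing cycle at the leader contributes the base value `p`.
-/

open Finset Nat

abbrev extenders {V : Type*} [Fintype V] [DecidableEq V] (A : V → V → Prop) [DecidableRel A]
    (v : V) (q : List V) : Finset V :=
  univ.filter (fun u => A u v ∧ (IsFwdPath A (u :: v :: q) ∨ IsFwdCycle A (u :: v :: q)))

section CompleteDigraph

variable {V : Type*}

theorem isFwdPath_ne_iff {l : List V} : IsFwdPath (· ≠ ·) l ↔ l ≠ [] ∧ l.Nodup :=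
  ⟨fun h => ⟨h.1, h.2.1⟩, fun h => ⟨h.1, h.2, h.2.isChain⟩⟩

theorem isFwdCycle_ne_cons_of_getLast? {L v : V} {q : List V} (hl : (v :: q).Nodup)
    (hlast : (v :: q).getLast? = some L) (hvL : v ≠ L) :
    IsFwdCycle (· ≠ ·) (L :: v :: q) := by
  have hsplit := List.dropLast_append_getLast? L hlast
  have hLdrop : L ∉ (v :: q).dropLast := fun h =>
    List.disjoint_of_nodup_append (by rwa [hsplit]) h (List.mem_singleton_self L)
  refine ⟨by simp, ?_, ?_, ?_⟩
  · rw [List.head?_cons, List.getLast?_cons_cons, hlast]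
  · rw [List.dropLast_cons_cons]
    exact List.nodup_cons.mpr ⟨hLdrop, hl.sublist (List.dropLast_sublist _)⟩
  · exact List.isChain_cons_cons.mpr ⟨hvL.symm, hl.isChain⟩

variable [Fintype V] [DecidableEq V]

theorem List.Nodup.card_compl_toFinset {l : List V} (hl : l.Nodup) :
    #l.toFinsetᶜ = Fintype.card V - l.length := by
  rw [card_compl, List.toFinset_card_of_nodup hl]

theorem compl_toFinset_subset_extenders {v : V} {q : List V} (hl : (v :: q).Nodup) :
    (v :: q).toFinsetᶜ ⊆ extenders (· ≠ ·) v q := by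
  intro u hu
  simp only [mem_compl, List.mem_toFinset] at hu
  simp only [mem_filter, mem_univ, true_and]
  exact ⟨fun h => hu (h ▸ List.mem_cons_self), Or.inl (isFwdPath_ne_iff.mpr
    ⟨List.cons_ne_nil _ _, List.nodup_cons.mpr ⟨hu, hl⟩⟩)⟩

theorem extenders_ne_nil_eq_filter_ne (L : V) : extenders (· ≠ ·) L [] = univ.filter (· ≠ L) :=
  filter_congr fun u _ => ⟨And.left, fun h => ⟨h, Or.inl (isFwdPath_ne_iff.mpr
    ⟨List.cons_ne_nil _ _, List.nodup_cons.mpr ⟨by simpa using h, List.nodup_singleton L⟩⟩)⟩⟩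

variable {L : V} {p : ℝ} {R : List V → V → ℝ} {v u : V} {q : List V}

namespace SatisfiesRRec

theorem apply_of_mem (hR : SatisfiesRRec (· ≠ ·) L p R) (hl : (v :: q).Nodup)
    (hlast : (v :: q).getLast? = some L) (hu : u ∈ extenders (· ≠ ·) v q) (hmem : u ∈ v :: q) :
    R (v :: q) u = p := by
  obtain ⟨-, hpath | hcycle⟩ := (mem_filter.mp hu).2
  · exact absurd hmem (List.nodup_cons.mp hpath.2.1).1
  · exact (hR _ u ⟨isFwdPath_ne_iff.mpr ⟨List.cons_ne_nil _ _, hl⟩, hlast, Or.inr hcycle⟩).1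
      hcycle

theorem apply_of_not_mem (hR : SatisfiesRRec (· ≠ ·) L p R) (hl : (v :: q).Nodup)
    (hlast : (v :: q).getLast? = some L) (hu : u ∉ v :: q) :
    R (v :: q) u = p + ∑ w ∈ extenders (· ≠ ·) u (v :: q), R (u :: v :: q) w := by
  have hpath : IsFwdPath (· ≠ ·) (u :: v :: q) :=
    isFwdPath_ne_iff.mpr ⟨List.cons_ne_nil _ _, List.nodup_cons.mpr ⟨hu, hl⟩⟩
  exact (hR _ u ⟨isFwdPath_ne_iff.mpr ⟨List.cons_ne_nil _ _, hl⟩, hlast, Or.inl hpath⟩).2 hpath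

theorem mul_factorial_le_sum (hR : SatisfiesRRec (· ≠ ·) L p R) (hp : 0 ≤ p)
    (hn : 2 ≤ Fintype.card V) (hl : (v :: q).Nodup) (hlast : (v :: q).getLast? = some L) :
    p * ((Fintype.card V - (v :: q).length)! : ℝ) ≤
      ∑ u ∈ extenders (· ≠ ·) v q, R (v :: q) u := by
  induction hm : Fintype.card V - (v :: q).length generalizing v q with
  | zero =>
    have hcover (u : V) : u ∈ v :: q := by
      have hfull := card_eq_zero.mp (hl.card_compl_toFinset.trans hm)
      rw [compl_eq_empty_iff, eq_univ_iff_forall] at hfull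
      exact List.mem_toFinset.mp (hfull u)
    have hvL : v ≠ L := by
      rintro rfl
      obtain _ | ⟨b, t⟩ := q
      · simp only [List.length_singleton] at hm; omega
      · exact (List.nodup_cons.mp hl).1 (List.mem_of_getLast? (List.getLast?_cons_cons ▸ hlast))
    have hL : L ∈ extenders (· ≠ ·) v q :=
      mem_filter.mpr ⟨mem_univ L, hvL.symm, Or.inr (isFwdCycle_ne_cons_of_getLast? hl hlast hvL)⟩
    calc p * ((0 : ℕ)! : ℝ) = R (v :: q) L := by rw [apply_of_mem hR hl hlast hL (hcover L)]; simp
      _ ≤ _ := single_le_sum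
          (fun u hu => (apply_of_mem hR hl hlast hu (hcover u)).symm ▸ hp) hL
  | succ m ih =>
    have hfresh : ∀ u ∈ (v :: q).toFinsetᶜ, p * (m ! : ℝ) ≤ R (v :: q) u := by
      intro u hu
      have hu : u ∉ v :: q := by simpa using hu
      have hl' : (u :: v :: q).Nodup := List.nodup_cons.mpr ⟨hu, hl⟩
      have hlast' : (u :: v :: q).getLast? = some L := by rwa [List.getLast?_cons_cons]
      have hT := ih hl' hlast' (by simp only [List.length_cons] at hm ⊢; omega)
      rw [apply_of_not_mem hR hl hlast hu]
      linarith
    have hrevisited : ∀ u ∈ extenders (· ≠ ·) v q, u ∉ (v :: q).toFinsetᶜ → 0 ≤ R (v :: q) u :=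
      fun u hu hmem => by
        have hmem : u ∈ v :: q := by simpa only [mem_compl, not_not, List.mem_toFinset] using hmem
        exact (apply_of_mem hR hl hlast hu hmem).symm ▸ hp
    calc p * ((m + 1)! : ℝ) = #(v :: q).toFinsetᶜ • (p * (m ! : ℝ)) := by
          rw [hl.card_compl_toFinset, hm, nsmul_eq_mul, Nat.factorial_succ]; push_cast; ring
      _ ≤ ∑ u ∈ (v :: q).toFinsetᶜ, R (v :: q) u := card_nsmul_le_sum _ _ _ hfresh
      _ ≤ _ := sum_le_sum_of_subset_of_nonneg (compl_toFinset_subset_extenders hl) hrevisited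

end SatisfiesRRec

end CompleteDigraph

/-- In the complete digraph on `n = |V| ≥ 2` vertices (every ordered
pair of distinct vertices is an arc), with leader `L` and premium `p ≥ 0`, the leader's
total redemption premium `R(L) = Σ_{u : (u, L) an arc} R((L), u)` is at least
`p · (n − 1)!`: it grows at least factorially in the number of vertices. -/
theorem leader_premium_factorial_lower_bound {V : Type*} [Fintype V] [DecidableEq V]
    (hn : 2 ≤ Fintype.card V) (L : V) (p : ℝ) (hp : 0 ≤ p)
    (R : List V → V → ℝ)
    (hR : SatisfiesRRec (fun u v : V => u ≠ v) L p R) :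
    p * (Nat.factorial (Fintype.card V - 1) : ℝ) ≤
      ∑ u ∈ Finset.univ.filter (fun u : V => u ≠ L), R [L] u := by
  rw [← extenders_ne_nil_eq_filter_ne]
  exact hR.mul_factorial_le_sum hp hn (List.nodup_singleton L) rfl
end

section
/- Let G be a finite digraph on a finite vertex set V, and let 𝓛 ⊆ V be a feedback vertex set of G, i.e., every directed cycle of G contains at least one vertex of 𝓛 (equivalently, the subgraph of G induced on V \ 𝓛 is acyclic). Let g : 𝓛 → ℝ be any function. Then there exists a unique function E assigning a real number to every arc (u, v) of G such that: E(u, v) = g(v) whenever v ∈ 𝓛, and E(u, v) = Σ_{w : (v, w) an arc of G} E(v, w) whenever v ∉ 𝓛. -/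
/-- `E` satisfies the escrow-premium recurrence determined by the leader set `𝓛` and
the leader premiums `g`: on each arc `(u, v)`, `E(u, v) = g(v)` if `v ∈ 𝓛`, and
`E(u, v) = Σ_{w : (v, w) an arc} E(v, w)` if `v ∉ 𝓛`. -/
def SatisfiesERec {V : Type*} [Fintype V] (A : V → V → Prop) [DecidableRel A]
    (𝓛 : Set V) (g : V → ℝ) (E : V → V → ℝ) : Prop :=
  ∀ u v, A u v →
    (v ∈ 𝓛 → E u v = g v) ∧
    (v ∉ 𝓛 → E u v = ∑ w ∈ Finset.univ.filter (fun w => A v w), E v w)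

/-!
Say that a non-leader `v` depends on `w` when `(v, w)` is an arc. An infinite chain of
dependencies is an infinite walk through non-leaders, and in a finite digraph such a walk closes
up, at its first repeated vertex, into a directed cycle avoiding `𝓛`. So dependency is
well-founded, the recurrence defines by well-founded recursion a value `F v` for every vertex,
`E(u, v) := F v` is a solution, and any two solutions agree by well-founded induction on `v`.
-/

section Dependency

variable {V : Type*} {A : V → V → Prop} {𝓛 : Set V}

lemma exists_isFwdCycle_of_walk [Finite V] (f : ℕ → V) (hf : ∀ n, A (f n) (f (n + 1))) :
    ∃ l, IsFwdCycle A l ∧ ∀ x ∈ l, x ∈ Set.range f := by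
  classical
  have hrep : ∃ j, ∃ i < j, f i = f j := by
    obtain ⟨a, b, hab, he⟩ := Finite.exists_ne_map_eq_of_infinite f
    rcases hab.lt_or_gt with h | h
    exacts [⟨b, a, h, he⟩, ⟨a, b, h, he.symm⟩]
  -- `Nat.find hrep` is the first time the walk revisits a vertex, so `f` is injective below it.
  obtain ⟨i, hij, hfij⟩ := Nat.find_spec hrep
  have hinj : ∀ a b, a < b → b < Nat.find hrep → f a ≠ f b :=
    fun a b hab hb he => Nat.find_min hrep hb ⟨a, hab, he⟩
  obtain ⟨n, hn⟩ : ∃ n, Nat.find hrep = i + (n + 1) := ⟨Nat.find hrep - i - 1, by omega⟩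
  refine ⟨(List.range (n + 2)).map (fun k => f (i + k)), ⟨by simp, ?_, ?_, ?_⟩, by simp⟩
  · rw [List.head?_map, List.getLast?_map, List.head?_range, List.getLast?_range]
    simp [hfij, hn]
  · rw [List.range_succ, List.map_append, List.map_singleton, List.dropLast_concat]
    refine List.Nodup.map_on (fun a ha b hb he => ?_) List.nodup_range
    simp only [List.mem_range] at ha hb
    by_contra hne
    rcases Nat.lt_or_gt_of_ne hne with h | h
    exacts [hinj _ _ (by omega) (by omega) he, hinj _ _ (by omega) (by omega) he.symm]
  · rw [List.Chain', List.isChain_map, List.isChain_range_succ]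
    exact fun m _ => hf (i + m)

lemma wellFounded_of_forall_isFwdCycle [Finite V]
    (hFVS : ∀ l : List V, IsFwdCycle A l → ∃ x ∈ l, x ∈ 𝓛) :
    WellFounded (fun w v => v ∉ 𝓛 ∧ A v w) := by
  refine wellFounded_iff_isEmpty_descending_chain.mpr ⟨fun ⟨f, hf⟩ => ?_⟩
  obtain ⟨l, hl, hlf⟩ := exists_isFwdCycle_of_walk f fun n => (hf n).2
  obtain ⟨x, hx, hx𝓛⟩ := hFVS l hl
  obtain ⟨n, rfl⟩ := hlf x hx
  exact (hf n).1 hx𝓛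

variable [Fintype V] [DecidableRel A] {g : V → ℝ}

lemma exists_satisfiesERec_of_wellFounded (hwf : WellFounded (fun w v => v ∉ 𝓛 ∧ A v w)) :
    ∃ E : V → V → ℝ, SatisfiesERec A 𝓛 g E := by
  classical
  let F : V → ℝ := hwf.fix fun v IH =>
    if h : v ∈ 𝓛 then g v
    else ∑ w ∈ (Finset.univ.filter (A v)).attach, IH w ⟨h, (Finset.mem_filter.mp w.2).2⟩
  have hF : ∀ v, F v = if v ∈ 𝓛 then g v else ∑ w ∈ Finset.univ.filter (A v), F w := by
    intro v
    refine (hwf.fix_eq _ v).trans ?_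
    split_ifs
    · rfl
    · exact Finset.sum_attach _ _
  exact ⟨fun _ v => F v, fun _ v _ =>
    ⟨fun hv => (hF v).trans (if_pos hv), fun hv => (hF v).trans (if_neg hv)⟩⟩

lemma SatisfiesERec.eq_of_wellFounded (hwf : WellFounded (fun w v => v ∉ 𝓛 ∧ A v w))
    {E₁ E₂ : V → V → ℝ} (h₁ : SatisfiesERec A 𝓛 g E₁) (h₂ : SatisfiesERec A 𝓛 g E₂)
    {u v : V} (huv : A u v) : E₁ u v = E₂ u v := by
  induction v using hwf.induction generalizing u with
  | _ v IH =>
    by_cases hv : v ∈ 𝓛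
    · rw [(h₁ u v huv).1 hv, (h₂ u v huv).1 hv]
    · rw [(h₁ u v huv).2 hv, (h₂ u v huv).2 hv]
      refine Finset.sum_congr rfl fun w hw => ?_
      have hvw : A v w := (Finset.mem_filter.mp hw).2
      exact IH w ⟨hv, hvw⟩ hvw

end Dependency

theorem escrow_premium_exists_unique_general {V : Type*} [Fintype V]
    (A : V → V → Prop) [DecidableRel A]
    (𝓛 : Set V) (hFVS : ∀ l : List V, IsFwdCycle A l → ∃ x ∈ l, x ∈ 𝓛)
    (g : V → ℝ) :
    (∃ E : V → V → ℝ, SatisfiesERec A 𝓛 g E) ∧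
    (∀ E₁ E₂ : V → V → ℝ, SatisfiesERec A 𝓛 g E₁ → SatisfiesERec A 𝓛 g E₂ →
      ∀ u v, A u v → E₁ u v = E₂ u v) := by
  have hwf := wellFounded_of_forall_isFwdCycle hFVS
  exact ⟨exists_satisfiesERec_of_wellFounded hwf,
    fun _ _ h₁ h₂ _ _ => h₁.eq_of_wellFounded hwf h₂⟩

/-- If `𝓛 ⊆ V` is a feedback vertex set of the finite digraph `G`
(every directed cycle of `G` contains a vertex of `𝓛`), then for any leader premiums
`g` there is a function `E` on arcs satisfying the escrow-premium recurrence, and it is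
unique on the arcs of `G`. -/
theorem escrow_premium_exists_unique {V : Type*} [Fintype V]
    (A : V → V → Prop) [DecidableRel A] (hirr : ∀ u, ¬ A u u)
    (𝓛 : Set V) (hFVS : ∀ l : List V, IsFwdCycle A l → ∃ x ∈ l, x ∈ 𝓛)
    (g : V → ℝ) :
    (∃ E : V → V → ℝ, SatisfiesERec A 𝓛 g E) ∧
    (∀ E₁ E₂ : V → V → ℝ, SatisfiesERec A 𝓛 g E₁ → SatisfiesERec A 𝓛 g E₂ →
      ∀ u v, A u v → E₁ u v = E₂ u v) :=
  escrow_premium_exists_unique_general A 𝓛 hFVS g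
end
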